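/- arXiv:2309.08852 — 2 statements merged into one kernel-verified Lean document; each statement's English description precedes it below -/
import Mathlib

section
/- Consider the augmented closed-loop system ζ_{k+1} = 𝒜ζ_k + ℬ₂q_k + ℬ₃w_k (zero external input φ ≡ 0), with p_k = 𝒞_p ζ_k ∈ ℝ^{n_Φ}, q_k = Φ̃(p_k) where Φ̃ : ℝ^{n_Φ} → ℝ^{n_Φ} satisfies Φ̃(p)ᵢ² ≤ pᵢ² for all p and all i (element-wise sector bound sec[−1,1]); v_k = 𝒞_v ζ_k + 𝒟_v q_k ∈ ℝ^{n_w}, and w_k = Δ·v_k for a scalar Δ with |Δ| ≤ 1. Set r_k = (p_k, q_k), s_k = (v_k, w_k), so r_k = 𝒞₁ζ_k + 𝒟₁₂q_k and s_k = 𝒞₂ζ_k + 𝒟₂₂q_k + 𝒟₂₃w_k with 𝒞₁ = [𝒞_p; 0], 𝒟₁₂ = [0; I], 𝒞₂ = [𝒞_v; 0], 𝒟₂₂ = [𝒟_v; 0], 𝒟₂₃ = [0; I]. Let ρ ∈ (0,1], let P be symmetric positive definite, and suppose there exist a diagonal matrix Λ with nonnegative diagonal entries, symmetric matrices M₁, M₂,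 and scalars λ₁ > 0, λ₂ > 0 such that M₁ − λ₁·blkdiag(Λ, −Λ) and M₂ − λ₂·blkdiag(I, −I) are positive definite, and such that ΓᵀΠΓ is negative semidefinite, where Γ has block rows [I, 0, 0], [𝒜, ℬ₂, ℬ₃], [𝒞₁, 𝒟₁₂, 0], [𝒞₂, 𝒟₂₂, 𝒟₂₃] and Π = blkdiag(−ρ²P, P, M₁, M₂). Then every trajectory satisfies ζ_kᵀPζ_k ≤ ρ^{2k}·ζ₀ᵀPζ₀ for all k ≥ 0, and consequently ‖ζ_k‖ ≤ √(λ_max(P)/λ_min(P))·ρᵏ·‖ζ₀‖. -/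
/-!
`V ζ = ζᵀPζ` is a Lyapunov function. Evaluating the LMI `ΓᵀΠΓ ⪯ 0` at the stacked vector
`(ζ_k, q_k, w_k)`, whose image under `Γ` is `(ζ_k, ζ_{k+1}, r_k, s_k)`, gives
`V ζ_{k+1} - ρ² V ζ_k + r_kᵀM₁r_k + s_kᵀM₂s_k ≤ 0`. The sector bounds on `Φ̃` and on `Δ` make
the quadratic forms of `blkdiag(Λ, -Λ)` at `r_k` and of `blkdiag(I, -I)` at `s_k` nonnegative,
hence also those of `M₁` and `M₂` (S-procedure), so `V` contracts by `ρ²` at every step.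
Squeezing `V` between `λ_min |ζ|²` and `λ_max |ζ|²` turns this into the norm bound.
-/

open Matrix

namespace Matrix

variable {m n : Type*} [Fintype m] [Fintype n]

theorem sumElim_dotProduct_fromBlocks_mulVec_sumElim (X : Matrix m m ℝ) (Y : Matrix n n ℝ)
    (a : m → ℝ) (b : n → ℝ) :
    Sum.elim a b ⬝ᵥ fromBlocks X 0 0 Y *ᵥ Sum.elim a b = a ⬝ᵥ X *ᵥ a + b ⬝ᵥ Y *ᵥ b := by
  simp [fromBlocks_mulVec, sumElim_dotProduct_sumElim]

theorem dotProduct_mulVec_nonneg_of_posSemidef_sub_smul {M N : Matrix n n ℝ} {c : ℝ}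
    (hc : 0 ≤ c) (hMN : (M - c • N).PosSemidef) {x : n → ℝ} (hx : 0 ≤ x ⬝ᵥ N *ᵥ x) :
    0 ≤ x ⬝ᵥ M *ᵥ x := by
  have h := hMN.dotProduct_mulVec_nonneg x
  simp only [star_trivial, sub_mulVec, dotProduct_sub, smul_mulVec, dotProduct_smul,
    smul_eq_mul, sub_nonneg] at h
  exact (mul_nonneg hc hx).trans h

theorem sumElim_dotProduct_sector_mulVec_nonneg [DecidableEq n] {Λ : n → ℝ}
    (hΛ : ∀ i, 0 ≤ Λ i) {a b : n → ℝ} (hab : ∀ i, b i ^ 2 ≤ a i ^ 2) :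
    0 ≤ Sum.elim a b ⬝ᵥ fromBlocks (diagonal Λ) 0 0 (-diagonal Λ) *ᵥ Sum.elim a b := by
  rw [sumElim_dotProduct_fromBlocks_mulVec_sumElim, neg_mulVec, dotProduct_neg,
    ← sub_eq_add_neg, sub_nonneg]
  simp only [mulVec_diagonal, dotProduct]
  exact Finset.sum_le_sum fun i _ => by nlinarith [mul_le_mul_of_nonneg_left (hab i) (hΛ i)]

theorem sumElim_smul_dotProduct_fromBlocks_one_mulVec_nonneg [DecidableEq n] {c : ℝ}
    (hc : |c| ≤ 1) (a : n → ℝ) :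
    0 ≤ Sum.elim a (c • a) ⬝ᵥ fromBlocks 1 0 0 (-1) *ᵥ Sum.elim a (c • a) := by
  rw [← diagonal_one]
  refine sumElim_dotProduct_sector_mulVec_nonneg (fun _ => zero_le_one) fun i => ?_
  rw [Pi.smul_apply, smul_eq_mul, mul_pow]
  exact mul_le_of_le_one_left (sq_nonneg _) ((sq_le_one_iff_abs_le_one c).2 hc)

theorem IsHermitian.dotProduct_mulVec_eq_sum_eigenvalues [DecidableEq n] {A : Matrix n n ℝ}
    (hA : A.IsHermitian) (x : n → ℝ) :
    x ⬝ᵥ A *ᵥ x =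
      ∑ i, hA.eigenvalues i * ((hA.eigenvectorUnitary : Matrix n n ℝ)ᵀ *ᵥ x) i ^ 2 := by
  conv_lhs => rw [hA.spectral_theorem]
  rw [Unitary.conjStarAlgAut_apply, star_eq_conjTranspose, conjTranspose_eq_transpose_of_trivial,
    ← mulVec_mulVec, ← mulVec_mulVec, dotProduct_mulVec, ← mulVec_transpose]
  simp only [dotProduct, mulVec_diagonal, Function.comp_apply, RCLike.ofReal_real_eq_id, id, sq]
  exact Finset.sum_congr rfl fun i _ => by ring

theorem IsHermitian.dotProduct_self_transpose_eigenvectorUnitary_mulVec [DecidableEq n]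
    {A : Matrix n n ℝ} (hA : A.IsHermitian) (x : n → ℝ) :
    ((hA.eigenvectorUnitary : Matrix n n ℝ)ᵀ *ᵥ x) ⬝ᵥ
        ((hA.eigenvectorUnitary : Matrix n n ℝ)ᵀ *ᵥ x) = x ⬝ᵥ x := by
  have hU : (hA.eigenvectorUnitary : Matrix n n ℝ) *
      (hA.eigenvectorUnitary : Matrix n n ℝ)ᵀ = 1 := by
    simpa [star_eq_conjTranspose] using Unitary.coe_mul_star_self hA.eigenvectorUnitary
  rw [mulVec_transpose, ← dotProduct_mulVec, mulVec_vecMul, hU, one_mulVec]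

theorem IsHermitian.inf'_eigenvalues_mul_le_dotProduct_mulVec [DecidableEq n] {A : Matrix n n ℝ}
    (hA : A.IsHermitian) (hn : (Finset.univ : Finset n).Nonempty) (x : n → ℝ) :
    Finset.univ.inf' hn hA.eigenvalues * (x ⬝ᵥ x) ≤ x ⬝ᵥ A *ᵥ x := by
  rw [hA.dotProduct_mulVec_eq_sum_eigenvalues,
    ← hA.dotProduct_self_transpose_eigenvectorUnitary_mulVec, dotProduct, Finset.mul_sum]
  refine Finset.sum_le_sum fun i _ => ?_
  rw [← sq]
  exact mul_le_mul_of_nonneg_right (Finset.inf'_le _ (Finset.mem_univ i)) (sq_nonneg _)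

theorem IsHermitian.dotProduct_mulVec_le_sup'_eigenvalues_mul [DecidableEq n] {A : Matrix n n ℝ}
    (hA : A.IsHermitian) (hn : (Finset.univ : Finset n).Nonempty) (x : n → ℝ) :
    x ⬝ᵥ A *ᵥ x ≤ Finset.univ.sup' hn hA.eigenvalues * (x ⬝ᵥ x) := by
  rw [hA.dotProduct_mulVec_eq_sum_eigenvalues,
    ← hA.dotProduct_self_transpose_eigenvectorUnitary_mulVec, dotProduct, Finset.mul_sum]
  refine Finset.sum_le_sum fun i _ => ?_
  rw [← sq]
  exact mul_le_mul_of_nonneg_right (Finset.le_sup' _ (Finset.mem_univ i)) (sq_nonneg _)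

theorem PosDef.sqrt_dotProduct_self_le_of_dotProduct_mulVec_le [DecidableEq n] {A : Matrix n n ℝ}
    (hA : A.PosDef) (hn : (Finset.univ : Finset n).Nonempty) {x y : n → ℝ} {t : ℝ} (ht : 0 ≤ t)
    (hxy : x ⬝ᵥ A *ᵥ x ≤ t ^ 2 * (y ⬝ᵥ A *ᵥ y)) :
    √(x ⬝ᵥ x) ≤
      √(Finset.univ.sup' hn hA.1.eigenvalues / Finset.univ.inf' hn hA.1.eigenvalues) * t *
        √(y ⬝ᵥ y) := by
  set lmin := Finset.univ.inf' hn hA.1.eigenvalues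
  set lmax := Finset.univ.sup' hn hA.1.eigenvalues
  have hlmin : 0 < lmin := (Finset.lt_inf'_iff _).2 fun i _ => hA.eigenvalues_pos i
  have hyy : 0 ≤ y ⬝ᵥ y := Finset.sum_nonneg fun i _ => mul_self_nonneg _
  have hsq : x ⬝ᵥ x ≤ lmax / lmin * t ^ 2 * (y ⬝ᵥ y) := by
    rw [div_mul_eq_mul_div, div_mul_eq_mul_div, le_div_iff₀ hlmin]
    calc x ⬝ᵥ x * lmin ≤ x ⬝ᵥ A *ᵥ x := by
          rw [mul_comm]; exact hA.1.inf'_eigenvalues_mul_le_dotProduct_mulVec hn x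
      _ ≤ t ^ 2 * (y ⬝ᵥ A *ᵥ y) := hxy
      _ ≤ t ^ 2 * (lmax * (y ⬝ᵥ y)) := by
          gcongr; exact hA.1.dotProduct_mulVec_le_sup'_eigenvalues_mul hn y
      _ = lmax * t ^ 2 * (y ⬝ᵥ y) := by ring
  calc √(x ⬝ᵥ x) ≤ √(lmax / lmin * t ^ 2 * (y ⬝ᵥ y)) := Real.sqrt_le_sqrt hsq
    _ = √(lmax / lmin) * t * √(y ⬝ᵥ y) := by
      rw [Real.sqrt_mul' _ hyy, Real.sqrt_mul' _ (sq_nonneg t), Real.sqrt_sq ht]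

end Matrix

section ClosedLoop

variable {ι κ μ : Type*} [Fintype ι] [Fintype κ] [Fintype μ]
  [DecidableEq ι] [DecidableEq κ] [DecidableEq μ]

def closedLoopMatrix (A : Matrix ι ι ℝ) (B₂ : Matrix ι κ ℝ) (B₃ : Matrix ι μ ℝ)
    (Cp : Matrix κ ι ℝ) (Cv : Matrix μ ι ℝ) (Dv : Matrix μ κ ℝ) :
    Matrix ((ι ⊕ ι) ⊕ ((κ ⊕ κ) ⊕ (μ ⊕ μ))) (ι ⊕ (κ ⊕ μ)) ℝ :=
  fromRows
    (fromRows (fromCols 1 (fromCols 0 0)) (fromCols A (fromCols B₂ B₃)))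
    (fromRows
      (fromCols (fromRows Cp 0) (fromCols (fromRows 0 1) 0))
      (fromCols (fromRows Cv 0) (fromCols (fromRows Dv 0) (fromRows 0 1))))

theorem closedLoopMatrix_mulVec (A : Matrix ι ι ℝ) (B₂ : Matrix ι κ ℝ) (B₃ : Matrix ι μ ℝ)
    (Cp : Matrix κ ι ℝ) (Cv : Matrix μ ι ℝ) (Dv : Matrix μ κ ℝ)
    (ζ : ι → ℝ) (q : κ → ℝ) (w : μ → ℝ) :
    closedLoopMatrix A B₂ B₃ Cp Cv Dv *ᵥ Sum.elim ζ (Sum.elim q w) =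
      Sum.elim (Sum.elim ζ (A *ᵥ ζ + B₂ *ᵥ q + B₃ *ᵥ w))
        (Sum.elim (Sum.elim (Cp *ᵥ ζ) q) (Sum.elim (Cv *ᵥ ζ + Dv *ᵥ q) w)) := by
  funext i
  rcases i with (i | i) | ((i | i) | (i | i)) <;>
    simp [closedLoopMatrix, fromBlocks_mulVec, add_assoc]

theorem closedLoop_dotProduct_mulVec_succ_le {A : Matrix ι ι ℝ} {B₂ : Matrix ι κ ℝ}
    {B₃ : Matrix ι μ ℝ} {Cp : Matrix κ ι ℝ} {Cv : Matrix μ ι ℝ} {Dv : Matrix μ κ ℝ}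
    {P : Matrix ι ι ℝ} {M₁ : Matrix (κ ⊕ κ) (κ ⊕ κ) ℝ} {M₂ : Matrix (μ ⊕ μ) (μ ⊕ μ) ℝ} {ρ : ℝ}
    (hLMI : (-((closedLoopMatrix A B₂ B₃ Cp Cv Dv)ᵀ *
      fromBlocks (fromBlocks (-(ρ ^ 2) • P) 0 0 P) 0 0 (fromBlocks M₁ 0 0 M₂) *
      closedLoopMatrix A B₂ B₃ Cp Cv Dv)).PosSemidef)
    (ζ : ι → ℝ) (q : κ → ℝ) (w : μ → ℝ)
    (hr : 0 ≤ Sum.elim (Cp *ᵥ ζ) q ⬝ᵥ M₁ *ᵥ Sum.elim (Cp *ᵥ ζ) q)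
    (hs : 0 ≤ Sum.elim (Cv *ᵥ ζ + Dv *ᵥ q) w ⬝ᵥ M₂ *ᵥ Sum.elim (Cv *ᵥ ζ + Dv *ᵥ q) w) :
    (A *ᵥ ζ + B₂ *ᵥ q + B₃ *ᵥ w) ⬝ᵥ P *ᵥ (A *ᵥ ζ + B₂ *ᵥ q + B₃ *ᵥ w) ≤
      ρ ^ 2 * (ζ ⬝ᵥ P *ᵥ ζ) := by
  have h := hLMI.dotProduct_mulVec_nonneg (Sum.elim ζ (Sum.elim q w))
  rw [star_trivial, neg_mulVec, dotProduct_neg, neg_nonneg, ← mulVec_mulVec, ← mulVec_mulVec,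
    dotProduct_mulVec, vecMul_transpose, closedLoopMatrix_mulVec] at h
  simp only [sumElim_dotProduct_fromBlocks_mulVec_sumElim, smul_mulVec,
    dotProduct_smul, smul_eq_mul] at h
  linarith

end ClosedLoop

theorem robust_exponential_stability_general
    (nζ nΦ nw : ℕ) (hnζ : 0 < nζ)
    (ρ : ℝ) (hρ0 : 0 < ρ)
    (P : Matrix (Fin nζ) (Fin nζ) ℝ) (hP : P.PosDef)
    (Φt : (Fin nΦ → ℝ) → (Fin nΦ → ℝ))
    (hΦt : ∀ p : Fin nΦ → ℝ, ∀ i, (Φt p i) ^ 2 ≤ (p i) ^ 2)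
    (Δ : ℝ) (hΔ : |Δ| ≤ 1)
    (A : Matrix (Fin nζ) (Fin nζ) ℝ)
    (B₂ : Matrix (Fin nζ) (Fin nΦ) ℝ)
    (B₃ : Matrix (Fin nζ) (Fin nw) ℝ)
    (Cp : Matrix (Fin nΦ) (Fin nζ) ℝ)
    (Cv : Matrix (Fin nw) (Fin nζ) ℝ)
    (Dv : Matrix (Fin nw) (Fin nΦ) ℝ)
    (C₁ : Matrix (Fin nΦ ⊕ Fin nΦ) (Fin nζ) ℝ) (hC₁ : C₁ = fromRows Cp 0)
    (D₁₂ : Matrix (Fin nΦ ⊕ Fin nΦ) (Fin nΦ) ℝ) (hD₁₂ : D₁₂ = fromRows 0 1)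
    (C₂ : Matrix (Fin nw ⊕ Fin nw) (Fin nζ) ℝ) (hC₂ : C₂ = fromRows Cv 0)
    (D₂₂ : Matrix (Fin nw ⊕ Fin nw) (Fin nΦ) ℝ) (hD₂₂ : D₂₂ = fromRows Dv 0)
    (D₂₃ : Matrix (Fin nw ⊕ Fin nw) (Fin nw) ℝ) (hD₂₃ : D₂₃ = fromRows 0 1)
    (Λ : Fin nΦ → ℝ) (hΛ : ∀ i, 0 ≤ Λ i)
    (M₁ : Matrix (Fin nΦ ⊕ Fin nΦ) (Fin nΦ ⊕ Fin nΦ) ℝ)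
    (M₂ : Matrix (Fin nw ⊕ Fin nw) (Fin nw ⊕ Fin nw) ℝ)
    (lam₁ lam₂ : ℝ) (hlam₁ : 0 < lam₁) (hlam₂ : 0 < lam₂)
    (hM₁pd : (M₁ - lam₁ •
        fromBlocks (diagonal Λ) 0 0 (-(diagonal Λ))).PosDef)
    (hM₂pd : (M₂ - lam₂ •
        fromBlocks (1 : Matrix (Fin nw) (Fin nw) ℝ) 0 0
          (-(1 : Matrix (Fin nw) (Fin nw) ℝ))).PosDef)
    (Γ : Matrix ((Fin nζ ⊕ Fin nζ) ⊕ ((Fin nΦ ⊕ Fin nΦ) ⊕ (Fin nw ⊕ Fin nw)))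
        (Fin nζ ⊕ (Fin nΦ ⊕ Fin nw)) ℝ)
    (hΓ : Γ = fromRows
        (fromRows
          (fromCols (1 : Matrix (Fin nζ) (Fin nζ) ℝ) (fromCols 0 0))
          (fromCols A (fromCols B₂ B₃)))
        (fromRows
          (fromCols C₁ (fromCols D₁₂ 0))
          (fromCols C₂ (fromCols D₂₂ D₂₃))))
    (Pm : Matrix ((Fin nζ ⊕ Fin nζ) ⊕ ((Fin nΦ ⊕ Fin nΦ) ⊕ (Fin nw ⊕ Fin nw)))
        ((Fin nζ ⊕ Fin nζ) ⊕ ((Fin nΦ ⊕ Fin nΦ) ⊕ (Fin nw ⊕ Fin nw))) ℝ)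
    (hPm : Pm = fromBlocks
        (fromBlocks (-(ρ ^ 2) • P) 0 0 P) 0 0
        (fromBlocks M₁ 0 0 M₂))
    (hLMI : (-(Γᵀ * Pm * Γ)).PosSemidef)
    (ζ : ℕ → Fin nζ → ℝ) (p q : ℕ → Fin nΦ → ℝ) (v w : ℕ → Fin nw → ℝ)
    (hp : ∀ k, p k = Cp.mulVec (ζ k))
    (hq : ∀ k, q k = Φt (p k))
    (hv : ∀ k, v k = Cv.mulVec (ζ k) + Dv.mulVec (q k))
    (hw : ∀ k, w k = Δ • v k)
    (hdyn : ∀ k, ζ (k + 1) = A.mulVec (ζ k) + B₂.mulVec (q k) + B₃.mulVec (w k)) :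
    ∀ k : ℕ,
      ζ k ⬝ᵥ P.mulVec (ζ k) ≤ ρ ^ (2 * k) * (ζ 0 ⬝ᵥ P.mulVec (ζ 0)) ∧
      Real.sqrt (ζ k ⬝ᵥ ζ k) ≤
        Real.sqrt
            ((Finset.univ.sup' (Finset.univ_nonempty_iff.mpr ⟨⟨0, hnζ⟩⟩)
                hP.1.eigenvalues) /
              (Finset.univ.inf' (Finset.univ_nonempty_iff.mpr ⟨⟨0, hnζ⟩⟩)
                hP.1.eigenvalues)) *
          ρ ^ k * Real.sqrt (ζ 0 ⬝ᵥ ζ 0) := by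
  subst hC₁ hD₁₂ hC₂ hD₂₂ hD₂₃ hΓ hPm
  have hstep : ∀ k, ζ (k + 1) ⬝ᵥ P *ᵥ ζ (k + 1) ≤ ρ ^ 2 * (ζ k ⬝ᵥ P *ᵥ ζ k) := fun k => by
    have hr := dotProduct_mulVec_nonneg_of_posSemidef_sub_smul hlam₁.le hM₁pd.posSemidef
      (sumElim_dotProduct_sector_mulVec_nonneg hΛ fun i => hq k ▸ hΦt (p k) i)
    have hs := dotProduct_mulVec_nonneg_of_posSemidef_sub_smul hlam₂.le hM₂pd.posSemidef
      (sumElim_smul_dotProduct_fromBlocks_one_mulVec_nonneg hΔ (v k))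
    rw [hp k] at hr
    rw [← hw k, hv k] at hs
    rw [hdyn k]
    exact closedLoop_dotProduct_mulVec_succ_le hLMI (ζ k) (q k) (w k) hr hs
  intro k
  have hdecay : ζ k ⬝ᵥ P *ᵥ ζ k ≤ ρ ^ (2 * k) * (ζ 0 ⬝ᵥ P *ᵥ ζ 0) := by
    rw [pow_mul]
    exact le_geom (u := fun j => ζ j ⬝ᵥ P *ᵥ ζ j) (sq_nonneg ρ) k fun j _ => hstep j
  refine ⟨hdecay, hP.sqrt_dotProduct_self_le_of_dotProduct_mulVec_le _ (pow_nonneg hρ0.le k) ?_⟩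
  rwa [← pow_mul, mul_comm k]

/-- Robust exponential stability (Theorem 1): for the augmented closed loop
with sector-bounded nonlinearity `Φ̃` (sector `[-1,1]`) and norm-bounded scalar
uncertainty `|Δ| ≤ 1`, feasibility of the LMI `ΓᵀΠΓ ⪯ 0` together with the
S-procedure conditions on the multipliers `M₁, M₂` implies
`ζ_kᵀPζ_k ≤ ρ^{2k} ζ₀ᵀPζ₀` and
`‖ζ_k‖ ≤ √(λmax(P)/λmin(P)) ρᵏ ‖ζ₀‖` for all `k`. -/
theorem robust_exponential_stability
    (nζ nΦ nw : ℕ) (hnζ : 0 < nζ)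
    (ρ : ℝ) (hρ0 : 0 < ρ) (hρ1 : ρ ≤ 1)
    (P : Matrix (Fin nζ) (Fin nζ) ℝ) (hP : P.PosDef)
    (Φt : (Fin nΦ → ℝ) → (Fin nΦ → ℝ))
    (hΦt : ∀ p : Fin nΦ → ℝ, ∀ i, (Φt p i) ^ 2 ≤ (p i) ^ 2)
    (Δ : ℝ) (hΔ : |Δ| ≤ 1)
    (A : Matrix (Fin nζ) (Fin nζ) ℝ)
    (B₂ : Matrix (Fin nζ) (Fin nΦ) ℝ)
    (B₃ : Matrix (Fin nζ) (Fin nw) ℝ)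
    (Cp : Matrix (Fin nΦ) (Fin nζ) ℝ)
    (Cv : Matrix (Fin nw) (Fin nζ) ℝ)
    (Dv : Matrix (Fin nw) (Fin nΦ) ℝ)
    (C₁ : Matrix (Fin nΦ ⊕ Fin nΦ) (Fin nζ) ℝ) (hC₁ : C₁ = fromRows Cp 0)
    (D₁₂ : Matrix (Fin nΦ ⊕ Fin nΦ) (Fin nΦ) ℝ) (hD₁₂ : D₁₂ = fromRows 0 1)
    (C₂ : Matrix (Fin nw ⊕ Fin nw) (Fin nζ) ℝ) (hC₂ : C₂ = fromRows Cv 0)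
    (D₂₂ : Matrix (Fin nw ⊕ Fin nw) (Fin nΦ) ℝ) (hD₂₂ : D₂₂ = fromRows Dv 0)
    (D₂₃ : Matrix (Fin nw ⊕ Fin nw) (Fin nw) ℝ) (hD₂₃ : D₂₃ = fromRows 0 1)
    (Λ : Fin nΦ → ℝ) (hΛ : ∀ i, 0 ≤ Λ i)
    (M₁ : Matrix (Fin nΦ ⊕ Fin nΦ) (Fin nΦ ⊕ Fin nΦ) ℝ) (hM₁ : M₁.IsSymm)
    (M₂ : Matrix (Fin nw ⊕ Fin nw) (Fin nw ⊕ Fin nw) ℝ) (hM₂ : M₂.IsSymm)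
    (lam₁ lam₂ : ℝ) (hlam₁ : 0 < lam₁) (hlam₂ : 0 < lam₂)
    (hM₁pd : (M₁ - lam₁ •
        fromBlocks (diagonal Λ) 0 0 (-(diagonal Λ))).PosDef)
    (hM₂pd : (M₂ - lam₂ •
        fromBlocks (1 : Matrix (Fin nw) (Fin nw) ℝ) 0 0
          (-(1 : Matrix (Fin nw) (Fin nw) ℝ))).PosDef)
    (Γ : Matrix ((Fin nζ ⊕ Fin nζ) ⊕ ((Fin nΦ ⊕ Fin nΦ) ⊕ (Fin nw ⊕ Fin nw)))
        (Fin nζ ⊕ (Fin nΦ ⊕ Fin nw)) ℝ)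
    (hΓ : Γ = fromRows
        (fromRows
          (fromCols (1 : Matrix (Fin nζ) (Fin nζ) ℝ) (fromCols 0 0))
          (fromCols A (fromCols B₂ B₃)))
        (fromRows
          (fromCols C₁ (fromCols D₁₂ 0))
          (fromCols C₂ (fromCols D₂₂ D₂₃))))
    (Pm : Matrix ((Fin nζ ⊕ Fin nζ) ⊕ ((Fin nΦ ⊕ Fin nΦ) ⊕ (Fin nw ⊕ Fin nw)))
        ((Fin nζ ⊕ Fin nζ) ⊕ ((Fin nΦ ⊕ Fin nΦ) ⊕ (Fin nw ⊕ Fin nw))) ℝ)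
    (hPm : Pm = fromBlocks
        (fromBlocks (-(ρ ^ 2) • P) 0 0 P) 0 0
        (fromBlocks M₁ 0 0 M₂))
    (hLMI : (-(Γᵀ * Pm * Γ)).PosSemidef)
    (ζ : ℕ → Fin nζ → ℝ) (p q : ℕ → Fin nΦ → ℝ) (v w : ℕ → Fin nw → ℝ)
    (hp : ∀ k, p k = Cp.mulVec (ζ k))
    (hq : ∀ k, q k = Φt (p k))
    (hv : ∀ k, v k = Cv.mulVec (ζ k) + Dv.mulVec (q k))
    (hw : ∀ k, w k = Δ • v k)
    (hdyn : ∀ k, ζ (k + 1) = A.mulVec (ζ k) + B₂.mulVec (q k) + B₃.mulVec (w k)) :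
    ∀ k : ℕ,
      ζ k ⬝ᵥ P.mulVec (ζ k) ≤ ρ ^ (2 * k) * (ζ 0 ⬝ᵥ P.mulVec (ζ 0)) ∧
      Real.sqrt (ζ k ⬝ᵥ ζ k) ≤
        Real.sqrt
            ((Finset.univ.sup' (Finset.univ_nonempty_iff.mpr ⟨⟨0, hnζ⟩⟩)
                hP.1.eigenvalues) /
              (Finset.univ.inf' (Finset.univ_nonempty_iff.mpr ⟨⟨0, hnζ⟩⟩)
                hP.1.eigenvalues)) *
          ρ ^ k * Real.sqrt (ζ 0 ⬝ᵥ ζ 0) :=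
  robust_exponential_stability_general nζ nΦ nw hnζ ρ hρ0 P hP Φt hΦt Δ hΔ A B₂ B₃ Cp Cv Dv C₁ hC₁
    D₁₂ hD₁₂ C₂ hC₂ D₂₂ hD₂₂ D₂₃ hD₂₃ Λ hΛ M₁ M₂ lam₁ lam₂ hlam₁ hlam₂ hM₁pd hM₂pd Γ hΓ Pm hPm hLMI
    ζ p q v w hp hq hv hw hdyn
end

section
/- Let n be a positive integer, α, β ∈ ℝⁿ with αᵢ ≤ βᵢ for every i, and let Φ : ℝⁿ → ℝⁿ be given element-wise by Φ(p)ᵢ = φᵢ(pᵢ) with each φᵢ sector-bounded in sec[αᵢ, βᵢ]. Let Λ be a diagonal n×n matrix with nonnegative diagonal entries, let λ₁ > 0, and let M₁ be a symmetric 2n×2n matrix such that M₁ − λ₁·[[−2A_φB_φΛ, (A_φ+B_φ)Λ], [(A_φ+B_φ)Λ, −2Λ]] is positive definite, where A_φ = diag(α), B_φ = diag(β). Then for every p ∈ ℝⁿ, the vector r = (p, Φ(p)) ∈ ℝ²ⁿ satisfies rᵀM₁r ≥ 0. -/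
/-!
The sector condition makes each `Λᵢ (φᵢ(pᵢ) − αᵢpᵢ)(βᵢpᵢ − φᵢ(pᵢ))` nonnegative, and the
quadratic form of the block matrix in the hypothesis at `r = (p, Φ(p))` is twice their sum.
By the S-procedure, `rᵀM₁r ≥ λ₁ · rᵀSr ≥ 0`.
-/

open Matrix

variable {ι : Type*} [Fintype ι] [DecidableEq ι]

def sectorMultiplier (α β Λ : ι → ℝ) : Matrix (ι ⊕ ι) (ι ⊕ ι) ℝ :=
  fromBlocks
    ((-2 : ℝ) • (diagonal α * diagonal β * diagonal Λ))
    ((diagonal α + diagonal β) * diagonal Λ)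
    ((diagonal α + diagonal β) * diagonal Λ)
    ((-2 : ℝ) • diagonal Λ)

theorem sectorMultiplier_quadForm (α β Λ x y : ι → ℝ) :
    Sum.elim x y ⬝ᵥ sectorMultiplier α β Λ *ᵥ Sum.elim x y =
      2 * ∑ i, Λ i * ((y i - α i * x i) * (β i * x i - y i)) := by
  simp only [sectorMultiplier, fromBlocks_mulVec, dotProduct, Fintype.sum_sum_type,
    Sum.elim_inl, Sum.elim_inr, Sum.elim_comp_inl, Sum.elim_comp_inr,
    add_mulVec, smul_mulVec, Matrix.add_mul, diagonal_mul_diagonal, mulVec_diagonal,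
    Pi.add_apply, Pi.smul_apply, smul_eq_mul,
    ← Finset.sum_add_distrib, Finset.mul_sum]
  exact Finset.sum_congr rfl fun i _ => by ring

theorem sectorMultiplier_quadForm_nonneg {α β Λ x y : ι → ℝ} (hΛ : ∀ i, 0 ≤ Λ i)
    (hsec : ∀ i, 0 ≤ (y i - α i * x i) * (β i * x i - y i)) :
    0 ≤ Sum.elim x y ⬝ᵥ sectorMultiplier α β Λ *ᵥ Sum.elim x y := by
  rw [sectorMultiplier_quadForm]
  exact mul_nonneg zero_le_two (Finset.sum_nonneg fun i _ => mul_nonneg (hΛ i) (hsec i))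

/-- The easy direction of the S-procedure. -/
theorem dotProduct_mulVec_nonneg_of_posSemidef_sub_smul {κ : Type*} [Fintype κ]
    {M S : Matrix κ κ ℝ} {t : ℝ} (hMS : (M - t • S).PosSemidef) (ht : 0 ≤ t)
    {r : κ → ℝ} (hS : 0 ≤ r ⬝ᵥ S *ᵥ r) : 0 ≤ r ⬝ᵥ M *ᵥ r := by
  have hdiff : 0 ≤ r ⬝ᵥ (M - t • S) *ᵥ r := by
    simpa only [star_trivial] using hMS.dotProduct_mulVec_nonneg r
  rw [sub_mulVec, dotProduct_sub, smul_mulVec, dotProduct_smul, smul_eq_mul] at hdiff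
  linarith [mul_nonneg ht hS]

theorem sector_s_procedure_multiplier_general
    (n : ℕ)
    (α β : Fin n → ℝ)
    (φ : Fin n → ℝ → ℝ)
    (hsec : ∀ i, ∀ x : ℝ, (φ i x - α i * x) * (β i * x - φ i x) ≥ 0)
    (Λ : Fin n → ℝ) (hΛ : ∀ i, 0 ≤ Λ i)
    (lam₁ : ℝ) (hlam₁ : 0 < lam₁)
    (M₁ : Matrix (Fin n ⊕ Fin n) (Fin n ⊕ Fin n) ℝ)
    (hPD : (M₁ - lam₁ •
        fromBlocks
          ((-2 : ℝ) • (diagonal α * diagonal β * diagonal Λ))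
          ((diagonal α + diagonal β) * diagonal Λ)
          ((diagonal α + diagonal β) * diagonal Λ)
          ((-2 : ℝ) • diagonal Λ)).PosDef) :
    ∀ p : Fin n → ℝ,
      0 ≤ (Sum.elim p (fun i => φ i (p i))) ⬝ᵥ
        M₁.mulVec (Sum.elim p (fun i => φ i (p i))) := fun p =>
  dotProduct_mulVec_nonneg_of_posSemidef_sub_smul (S := sectorMultiplier α β Λ)
    hPD.posSemidef hlam₁.le (sectorMultiplier_quadForm_nonneg hΛ fun i => hsec i (p i))

/-- Sector quadratic constraint combined with the S-procedure: if
`M₁ − λ₁·[[−2AφBφΛ, (Aφ+Bφ)Λ], [(Aφ+Bφ)Λ, −2Λ]] ≻ 0` with `λ₁ > 0` and `Λ ⪰ 0`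
diagonal, then for every `p` the vector `r = (p, Φ(p))` satisfies
`rᵀM₁r ≥ 0`, where `Φ` is element-wise sector-bounded in `sec[α, β]`. -/
theorem sector_s_procedure_multiplier
    (n : ℕ) (hn : 0 < n)
    (α β : Fin n → ℝ) (hαβ : ∀ i, α i ≤ β i)
    (φ : Fin n → ℝ → ℝ)
    (hsec : ∀ i, ∀ x : ℝ, (φ i x - α i * x) * (β i * x - φ i x) ≥ 0)
    (Λ : Fin n → ℝ) (hΛ : ∀ i, 0 ≤ Λ i)
    (lam₁ : ℝ) (hlam₁ : 0 < lam₁)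
    (M₁ : Matrix (Fin n ⊕ Fin n) (Fin n ⊕ Fin n) ℝ) (hM₁ : M₁.IsSymm)
    (hPD : (M₁ - lam₁ •
        fromBlocks
          ((-2 : ℝ) • (diagonal α * diagonal β * diagonal Λ))
          ((diagonal α + diagonal β) * diagonal Λ)
          ((diagonal α + diagonal β) * diagonal Λ)
          ((-2 : ℝ) • diagonal Λ)).PosDef) :
    ∀ p : Fin n → ℝ,
      0 ≤ (Sum.elim p (fun i => φ i (p i))) ⬝ᵥ
        M₁.mulVec (Sum.elim p (fun i => φ i (p i))) :=
  sector_s_procedure_multiplier_general n α β φ hsec Λ hΛ lam₁ hlam₁ M₁ hPD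
end
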